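/- Let A be a pca with K₂(A) based on A, and γ : A → K₂(A) the constant-functions morphism γ(a) = {â}. Then for any decidable applicative morphism δ : A → B such that every total function A → A is representable with respect to δ, there is a greatest (in the preorder on applicative morphisms) decidable applicative morphism ε : K₂(A) → B with εγ ≅ δ; explicitly, ε(α) = { b ∈ B : b represents α w.r.t. δ }. -/

import Mathlib

open Classical

noncomputable section

namespace OostenK2

universe u

/-! ### Finite partial functions -/

/-- Finite partial functions `A ⇀ A`, as finite functional graphs,
ordered by inclusion of graphs. -/
abbrev FPF (A : Type u) : Type u :=
  {p : Set (A × A) // (∀ ⦃a b b'⦄, (a, b) ∈ p → (a, b') ∈ p → b = b') ∧ p.Finite}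

variable {A : Type u}

/-- The domain of a finite partial function. -/
def FPF.dom (p : FPF A) : Set A := Prod.fst '' p.val

/-- The empty finite partial function (the root of sequential trees). -/
def FPF.empty (A : Type u) : FPF A :=
  ⟨∅, fun _ _ _ h => absurd h (Set.notMem_empty _), Set.finite_empty⟩

/-- A total function `α` extends the finite partial function `p`. -/
def agrees (α : A → A) (p : FPF A) : Prop := ∀ ⦃a b⦄, (a, b) ∈ p.val → α a = b

/-- A partial function `β` extends the finite partial function `p`. -/
def agreesP (β : A → Option A) (p : FPF A) : Prop :=
  ∀ ⦃a b⦄, (a, b) ∈ p.val → β a = some b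

/-- Two finite partial functions are compatible if their union is a function. -/
def compatFPF (s t : FPF A) : Prop :=
  ∀ ⦃a b b'⦄, (a, b) ∈ s.val → (a, b') ∈ t.val → b = b'

/-! ### Trees -/

section Trees

variable {X : Type*} [PartialOrder X]

/-- A leaf of `T`: an element of `T` with no strict extension in `T`. -/
def IsLeaf (T : Set X) (p : X) : Prop := p ∈ T ∧ ¬∃ q ∈ T, p < q

/-- `q` is an immediate successor of `p` in `T`. -/
def ImmSucc (T : Set X) (p q : X) : Prop :=
  q ∈ T ∧ p < q ∧ ¬∃ t ∈ T, p < t ∧ t < q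

/-- `T` is a tree with root `root`: the root belongs to `T`, lies below every
element, and the predecessors of any element form a chain. -/
def IsTreeOn (root : X) (T : Set X) : Prop :=
  root ∈ T ∧ (∀ p ∈ T, root ≤ p) ∧ ∀ p ∈ T, IsChain (· ≤ ·) {t | t ∈ T ∧ t ≤ p}

/-- A tree is well-founded iff it has no infinite strictly increasing path. -/
def WellFoundedTree (T : Set X) : Prop :=
  ¬∃ f : ℕ → X, (∀ n, f n ∈ T) ∧ StrictMono f

end Trees

/-- A sequential tree: a tree of finite partial functions, rooted at the empty
function, in which all immediate successors of a non-leaf `p` have domain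
`dom p ∪ {a}` for a single `a ∉ dom p`. -/
def IsSeqTree (T : Set (FPF A)) : Prop :=
  IsTreeOn (FPF.empty A) T ∧
  ∀ p ∈ T, ¬IsLeaf T p →
    ∃ a ∉ FPF.dom p, ∀ q, ImmSucc T p q → FPF.dom q = insert a (FPF.dom p)

/-- A total sequential tree: the immediate successors of a non-leaf `p` are
*all* extensions of `p` with domain `dom p ∪ {a}`. -/
def IsTotalSeqTree (T : Set (FPF A)) : Prop :=
  IsTreeOn (FPF.empty A) T ∧
  ∀ p ∈ T, ¬IsLeaf T p →
    ∃ a ∉ FPF.dom p,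
      ∀ q : FPF A, ImmSucc T p q ↔ p < q ∧ FPF.dom q = insert a (FPF.dom p)

/-- `Φ` (as a relation `(A → A) → A → Prop`) is a partial sequential function:
`Φ α = b` iff the path of `α` through some total sequential tree `T` ends in a
leaf `v` with `F v = b`. -/
def SeqRel (Φ : (A → A) → A → Prop) : Prop :=
  ∃ (T : Set (FPF A)) (F : FPF A → A), IsTotalSeqTree T ∧
    ∀ α b, Φ α b ↔ ∃ v, IsLeaf T v ∧ agrees α v ∧ F v = b

/-- A total bisequential tree: pairs of finite partial functions ordered by
pairwise inclusion; at every non-leaf, either the first or the second component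
is interrogated at a single new argument, with all possible answers present. -/
def IsTotalBiTree (T : Set (FPF A × FPF A)) : Prop :=
  IsTreeOn (FPF.empty A, FPF.empty A) T ∧
  ∀ p ∈ T, ¬IsLeaf T p →
    (∃ a ∉ FPF.dom p.1, ∀ q : FPF A × FPF A,
        ImmSucc T p q ↔ q.2 = p.2 ∧ p.1 ≤ q.1 ∧ FPF.dom q.1 = insert a (FPF.dom p.1)) ∨
    (∃ b ∉ FPF.dom p.2, ∀ q : FPF A × FPF A,
        ImmSucc T p q ↔ q.1 = p.1 ∧ p.2 ≤ q.2 ∧ FPF.dom q.2 = insert b (FPF.dom p.2))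

/-- `G` is a total bisequential function. -/
def BiSeqTotal (G : (A → A) → (A → A) → A) : Prop :=
  ∃ (T : Set (FPF A × FPF A)) (F : FPF A × FPF A → A), IsTotalBiTree T ∧
    ∀ α β, ∃ v, IsLeaf T v ∧ agrees α v.1 ∧ agrees β v.2 ∧ G α β = F v

/-! ### Interrogations (total functions)

Throughout, `mk : List A → A` is an injective coding of finite sequences,
`qp b` is the code `⟨q,b⟩` of a query and `rp c` the code `⟨r,c⟩` of a result. -/

/-- `L` is an interrogation of `β` by `α`. -/
def Interrog (mk : List A → A) (qp : A → A) (α β : A → A) (L : List A) : Prop :=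
  ∀ j (hj : j < L.length), ∃ b, α (mk (L.take j)) = qp b ∧ β b = L[j]'hj

/-- `φ_α(β) = c` via interrogations. -/
def phiRel (mk : List A → A) (qp rp : A → A) (α β : A → A) (c : A) : Prop :=
  ∃ L, Interrog mk qp α β L ∧ α (mk L) = rp c

/-- `L` is an `a`-interrogation of `β` by `α`. -/
def AInterrog (mk : List A → A) (qp : A → A) (a : A) (α β : A → A) (L : List A) : Prop :=
  ∀ j (hj : j < L.length), ∃ b, α (mk (a :: L.take j)) = qp b ∧ β b = L[j]'hj

/-- `φ^a(α,β) = c` via `a`-interrogations. -/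
def phiA (mk : List A → A) (qp rp : A → A) (a : A) (α β : A → A) (c : A) : Prop :=
  ∃ L, AInterrog mk qp a α β L ∧ α (mk (a :: L)) = rp c

/-- The application of `K₂(A)`: `αβ` is defined with value `γ` iff
`φ^a(α,β) = γ a` for every `a`. -/
def AppRel (mk : List A → A) (qp rp : A → A) (α β γ : A → A) : Prop :=
  ∀ a, phiA mk qp rp a α β (γ a)

/-! ### Partial combinatory algebras (abstractly) -/

/-- A set with a partial binary application. -/
structure PCAStruct (X : Type*) where
  app : X → X → Part X

/-- Extension of the application to `Part`; `Part`-equality is Kleene equality. -/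
def pap {X : Type*} (S : PCAStruct X) (u v : Part X) : Part X :=
  u.bind fun a => v.bind fun b => S.app a b

/-- `S` is a partial combinatory algebra: there are `k`, `s` with
`kxy = x` (everywhere defined), `sxy` defined, and `sxyz ≃ (xz)(yz)`. -/
def IsPCA {X : Type*} (S : PCAStruct X) : Prop :=
  ∃ k s : X,
    (∀ x y : X, pap S (S.app k x) (Part.some y) = Part.some x) ∧
    (∀ x y : X, (pap S (S.app s x) (Part.some y)).Dom) ∧
    (∀ x y z : X,
      pap S (pap S (S.app s x) (Part.some y)) (Part.some z)
        = pap S (S.app x z) (S.app y z))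

/-- `t`, `f` are Booleans of `S`: distinct, with a definition-by-cases combinator. -/
def IsBooleans {X : Type*} (S : PCAStruct X) (t f : X) : Prop :=
  t ≠ f ∧ ∃ C : X, ∀ a b : X,
    pap S (pap S (S.app C t) (Part.some a)) (Part.some b) = Part.some a ∧
    pap S (pap S (S.app C f) (Part.some a)) (Part.some b) = Part.some b

/-- Applicative morphism `γ : S → T`: a total relation such that some realizer
`r` tracks application. -/
def IsAppMor {X Y : Type*} (S : PCAStruct X) (T : PCAStruct Y) (γ : X → Set Y) : Prop :=
  (∀ x, (γ x).Nonempty) ∧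
  ∃ r : Y, ∀ x x' z : X, z ∈ S.app x x' → ∀ b ∈ γ x, ∀ b' ∈ γ x',
    ∃ w, w ∈ pap T (T.app r b) (Part.some b') ∧ w ∈ γ z

/-- The preorder on applicative morphisms. -/
def morLE {X Y : Type*} (T : PCAStruct Y) (γ γ' : X → Set Y) : Prop :=
  ∃ s : Y, ∀ x : X, ∀ b ∈ γ x, ∃ c, c ∈ T.app s b ∧ c ∈ γ' x

def morEquiv {X Y : Type*} (T : PCAStruct Y) (γ γ' : X → Set Y) : Prop :=
  morLE T γ γ' ∧ morLE T γ' γ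

/-- Composition of applicative morphisms (as total relations). -/
def morComp {X Y Z : Type*} (γ : X → Set Y) (ε : Y → Set Z) : X → Set Z :=
  fun x => ⋃ y ∈ γ x, ε y

/-- Decidability of a morphism w.r.t. chosen Booleans. -/
def IsDecidableMor {X Y : Type*} (T : PCAStruct Y) (γ : X → Set Y)
    (tX fX : X) (tY fY : Y) : Prop :=
  ∃ d : Y, (∀ b ∈ γ tX, T.app d b = Part.some tY) ∧
    (∀ b ∈ γ fX, T.app d b = Part.some fY)

/-- `rf` represents the partial function `f : X ⇀ X` w.r.t. `γ`. -/
def RepresentsPFun {X Y : Type*} (T : PCAStruct Y) (γ : X → Set Y)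
    (f : X → Option X) (rf : Y) : Prop :=
  ∀ a x, f a = some x → ∀ b ∈ γ a, ∃ c, c ∈ T.app rf b ∧ c ∈ γ x

/-- The pca `K₂(A)` on `A^A` (application via `a`-interrogations). -/
def K2 (mk : List A → A) (qp rp : A → A) : PCAStruct (A → A) where
  app α β := ⟨∀ a, ∃ c, phiA mk qp rp a α β c, fun h a => (h a).choose⟩

/-! ### Interrogations for partial functions -/

/-- Interrogation of a partial `β` by a partial `α`. -/
def PInterrog (mk : List A → A) (qp : A → A) (α β : A → Option A) (L : List A) : Prop :=
  ∀ j (hj : j < L.length), ∃ b, α (mk (L.take j)) = some (qp b) ∧ β b = some (L[j]'hj)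

/-- `φ_α(β) = c` for partial functions. -/
def phiPRel (mk : List A → A) (qp rp : A → A) (α β : A → Option A) (c : A) : Prop :=
  ∃ L, PInterrog mk qp α β L ∧ α (mk L) = some (rp c)

/-- `a`-interrogation of a partial `β` by a partial `α`. -/
def PAInterrog (mk : List A → A) (qp : A → A) (a : A) (α β : A → Option A)
    (L : List A) : Prop :=
  ∀ j (hj : j < L.length), ∃ b, α (mk (a :: L.take j)) = some (qp b) ∧ β b = some (L[j]'hj)

/-- `φ^a(α,β) = c` for partial functions. -/
def phiPA (mk : List A → A) (qp rp : A → A) (a : A) (α β : A → Option A) (c : A) : Prop :=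
  ∃ L, PAInterrog mk qp a α β L ∧ α (mk (a :: L)) = some (rp c)

/-- The (total!) application of `K₂^p(A)` on partial functions. -/
def K2pApp (mk : List A → A) (qp rp : A → A) (α β : A → Option A) : A → Option A :=
  fun a => if h : ∃ c, phiPA mk qp rp a α β c then some h.choose else none

/-- `K₂^p(A)` as a `PCAStruct` (with everywhere-defined application). -/
def K2p (mk : List A → A) (qp rp : A → A) : PCAStruct (A → Option A) :=
  ⟨fun α β => Part.some (K2pApp mk qp rp α β)⟩

/-! ### A pca with standard structure (Booleans, pairing, tuple coding, recursion) -/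

/-- A pca together with the standard derived structure: Booleans with a case
combinator, pairing, an injective standard tuple coding with combinators
manipulating it, and a fixed-point combinator. All of these exist in any
(nontrivial) pca. -/
structure StdPCA (A : Type u) where
  S : PCAStruct A
  isPCA : IsPCA S
  t : A
  f : A
  t_ne_f : t ≠ f
  Cc : A
  C_t : ∀ a b : A, pap S (pap S (S.app Cc t) (Part.some a)) (Part.some b) = Part.some a
  C_f : ∀ a b : A, pap S (pap S (S.app Cc f) (Part.some a)) (Part.some b) = Part.some b
  pairF : A → A → A
  Pc : A
  P0 : A
  P1 : A
  P_spec : ∀ x y : A, pap S (S.app Pc x) (Part.some y) = Part.some (pairF x y)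
  P0_spec : ∀ x y : A, S.app P0 (pairF x y) = Part.some x
  P1_spec : ∀ x y : A, S.app P1 (pairF x y) = Part.some y
  tup : List A → A
  tup_inj : Function.Injective tup
  CONS : A
  CONS_spec : ∀ (x : A) (L : List A),
    pap S (S.app CONS x) (Part.some (tup L)) = Part.some (tup (x :: L))
  SNOC : A
  SNOC_spec : ∀ (L : List A) (y : A),
    pap S (S.app SNOC (tup L)) (Part.some y) = Part.some (tup (L ++ [y]))
  Zc : A
  Z_spec : ∀ g : A, (S.app Zc g).Dom ∧ ∀ zg ∈ S.app Zc g, ∀ x : A,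
    S.app zg x = pap S (S.app g zg) (Part.some x)

/-- The partial function `x ↦ a·x` represented by `a ∈ A`. -/
def abar (P : StdPCA A) (a : A) : A → Option A :=
  fun x => if h : (P.S.app a x).Dom then some ((P.S.app a x).get h) else none

/-- An `x`-interrogation of the oracle `g : A ⇀ A` by `a ∈ A`, inside the pca. -/
def OInterrog (P : StdPCA A) (g : A → Option A) (a x : A) (L : List A) : Prop :=
  ∀ j (hj : j < L.length), ∃ v,
    P.S.app a (P.tup (x :: L.take j)) = Part.some (P.pairF P.f v) ∧ g v = some (L[j]'hj)

/-- The oracle application of `A[g]` : `a ·^g x = c`. -/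
def oapp (P : StdPCA A) (g : A → Option A) (a x c : A) : Prop :=
  ∃ L, OInterrog P g a x L ∧ P.S.app a (P.tup (x :: L)) = Part.some (P.pairF P.t c)

/-- `fn ≤_T g` : `fn` is representable in `A[g]`. -/
def leT (P : StdPCA A) (fn g : A → Option A) : Prop :=
  ∃ a : A, ∀ x y, fn x = some y → oapp P g a x y

/-- `j` is the join `f ⊔ g`. -/
def JoinSpec (P : StdPCA A) (f g j : A → Option A) : Prop :=
  (∀ x, j (P.pairF P.t x) = f x) ∧ (∀ x, j (P.pairF P.f x) = g x) ∧
  (∀ y, (∀ x, y ≠ P.pairF P.t x ∧ y ≠ P.pairF P.f x) → j y = none)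

/-- `K₂(A)` (built from the coding `mk`, `q`, `r`) is compatible with the pca
structure on `A`: elements of `A` translate between the codings and between
`q, r` and `⊥, ⊤`. -/
def CompatCoding (P : StdPCA A) (mk : List A → A) (q r : A) : Prop :=
  (∃ a : A, ∀ L, P.S.app a (mk L) = Part.some (P.tup L)) ∧
  (∃ b : A, ∀ L, P.S.app b (P.tup L) = Part.some (mk L)) ∧
  (∃ c : A, P.S.app c q = Part.some P.f ∧ P.S.app c r = Part.some P.t)

/-!
`ε α` consists of the `δ`-representers of `α`. Representers compose along `K₂`-application:
from representers `b` of `α` and `b'` of `β` and a `δ`-code of `a`, the `a`-interrogation of `β`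
by `α` is simulated in `B` on `δ`-codes of its prefixes `a :: L`, using `δ`'s realizer on the
projections and on `SNOC`, `δ`'s decider to tell queries `p⊥v` from results `p⊤c`, and `b'` to
answer queries; a fixed point in `B` makes this loop uniform in `b` and `b'`. A representer of a
constant function evaluated at one fixed code yields `ε ∘ γ ≼ δ` and decidability, while `k u`
represents `const x` for `u ∈ δ x`. For maximality, `K₂(A)` has an element `D` with
`D α (const x) = const (α x)`; transporting this identity along any `ε'` with `ε' ∘ γ ≅ δ` turns
an `ε'`-code of `α` into a `δ`-representer of `α`.
-/
section Application

variable {Y : Type*} {T : PCAStruct Y}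

@[simp] lemma pap_some_some (a b : Y) : pap T (Part.some a) (Part.some b) = T.app a b := by
  simp [pap]

lemma mem_pap_iff {u v : Part Y} {c : Y} :
    c ∈ pap T u v ↔ ∃ a ∈ u, ∃ b ∈ v, c ∈ T.app a b := by
  simp [pap, Part.mem_bind_iff]

lemma mem_pap {u v : Part Y} {a b c : Y} (ha : a ∈ u) (hb : b ∈ v) (hc : c ∈ T.app a b) :
    c ∈ pap T u v :=
  mem_pap_iff.2 ⟨a, ha, b, hb, hc⟩

lemma mem_pap_app {r x y w : Y} {u v : Part Y} (h : w ∈ pap T (T.app r x) (Part.some y))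
    (hx : x ∈ u) (hy : y ∈ v) : w ∈ pap T (pap T (Part.some r) u) v := by
  obtain ⟨rx, hrx, y', hy', hw⟩ := mem_pap_iff.1 h
  obtain rfl := Part.mem_some_iff.1 hy'
  exact mem_pap (mem_pap (Part.mem_some r) hx hrx) hy hw

end Application

structure Combinators {Y : Type*} (T : PCAStruct Y) where
  k : Y
  s : Y
  i : Y
  k_app : ∀ x, ∃ kx, T.app k x = Part.some kx ∧ ∀ y, T.app kx y = Part.some x
  s_app : ∀ x y, ∃ sxy, pap T (T.app s x) (Part.some y) = Part.some sxy ∧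
    ∀ z, T.app sxy z = pap T (T.app x z) (T.app y z)
  i_app : ∀ x, T.app i x = Part.some x

lemma IsPCA.nonempty_combinators {Y : Type*} {T : PCAStruct Y} (hT : IsPCA T) :
    Nonempty (Combinators T) := by
  obtain ⟨k, s, hk, hs, hsxyz⟩ := hT
  have k_app : ∀ x, ∃ kx, T.app k x = Part.some kx ∧ ∀ y, T.app kx y = Part.some x := by
    intro x
    have hx : x ∈ pap T (T.app k x) (Part.some x) := by rw [hk]; exact Part.mem_some x
    obtain ⟨kx, hkx, -⟩ := mem_pap_iff.1 hx
    refine ⟨kx, Part.eq_some_iff.2 hkx, fun y => ?_⟩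
    have hkxy := hk x y
    rwa [Part.eq_some_iff.2 hkx, pap_some_some] at hkxy
  have s_app : ∀ x y, ∃ sxy, pap T (T.app s x) (Part.some y) = Part.some sxy ∧
      ∀ z, T.app sxy z = pap T (T.app x z) (T.app y z) := by
    intro x y
    have hsxy := Part.eq_some_iff.2 (Part.get_mem (hs x y))
    refine ⟨_, hsxy, fun z => ?_⟩
    have h := hsxyz x y z
    rwa [hsxy, pap_some_some] at h
  obtain ⟨skk, hskk, hskk_app⟩ := s_app k k
  refine ⟨⟨k, s, skk, k_app, s_app, fun x => ?_⟩⟩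
  obtain ⟨kx, hkx, hkxy⟩ := k_app x
  rw [hskk_app, hkx, pap_some_some, hkxy]

inductive Tm (Y : Type*) where
  | var : ℕ → Tm Y
  | con : Y → Tm Y
  | app : Tm Y → Tm Y → Tm Y

@[simp] def Tm.eval {Y : Type*} (T : PCAStruct Y) (ρ : ℕ → Y) : Tm Y → Part Y
  | .var n => Part.some (ρ n)
  | .con a => Part.some a
  | .app M N => pap T (M.eval T ρ) (N.eval T ρ)

namespace Combinators

variable {Y : Type*} {T : PCAStruct Y} (c : Combinators T)

/-- Bracket abstraction of the variable `n`. -/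
def abs (n : ℕ) : Tm Y → Tm Y
  | .var m => if m = n then .con c.i else .app (.con c.k) (.var m)
  | .con a => .app (.con c.k) (.con a)
  | .app M N => .app (.app (.con c.s) (abs n M)) (abs n N)

def env (l : List Y) (n : ℕ) : Y := l.getD n c.k

lemma env_append_of_ne {l : List Y} {y : Y} {m : ℕ} (h : m ≠ l.length) :
    c.env (l ++ [y]) m = c.env l m := by
  rcases lt_or_gt_of_ne h with h | h
  · exact List.getD_append _ _ _ _ h
  · rw [env, env, List.getD_eq_default _ _ (by simp; omega),
      List.getD_eq_default _ _ (by omega)]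

lemma eval_abs (l : List Y) (M : Tm Y) : ∃ v, (c.abs l.length M).eval T (c.env l) = Part.some v ∧
    ∀ y, T.app v y = M.eval T (c.env (l ++ [y])) := by
  induction M with
  | var m =>
    by_cases h : m = l.length
    · subst h
      exact ⟨c.i, by simp [abs], fun y => by simp [c.i_app, env]⟩
    · obtain ⟨kx, hkx, hkxy⟩ := c.k_app (c.env l m)
      exact ⟨kx, by simp [abs, h, hkx], fun y => by simp [hkxy, c.env_append_of_ne h]⟩
  | con a =>
    obtain ⟨ka, hka, hkay⟩ := c.k_app a
    exact ⟨ka, by simp [abs, hka], fun y => by simp [hkay]⟩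
  | app M N ihM ihN =>
    obtain ⟨vM, hM, hMy⟩ := ihM
    obtain ⟨vN, hN, hNy⟩ := ihN
    obtain ⟨v, hv, hvy⟩ := c.s_app vM vN
    exact ⟨v, by simp [abs, hM, hN, hv], fun y => by simp [hvy, hMy, hNy]⟩

lemma exists_lam₁ (M : Tm Y) : ∃ e, ∀ x, T.app e x = M.eval T (c.env [x]) := by
  obtain ⟨e, -, he⟩ := c.eval_abs [] M
  exact ⟨e, he⟩

lemma exists_lam₂ (M : Tm Y) : ∃ e, ∀ x, ∃ ex, T.app e x = Part.some ex ∧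
    ∀ y, T.app ex y = M.eval T (c.env [x, y]) := by
  obtain ⟨e, -, he⟩ := c.eval_abs [] (c.abs 1 M)
  refine ⟨e, fun x => ?_⟩
  obtain ⟨ex, hex, hexy⟩ := c.eval_abs [x] M
  exact ⟨ex, by simpa [he] using hex, hexy⟩

lemma exists_lam₃ (M : Tm Y) : ∃ e, ∀ x, ∃ ex, T.app e x = Part.some ex ∧
    ∀ y, ∃ exy, T.app ex y = Part.some exy ∧ ∀ z, T.app exy z = M.eval T (c.env [x, y, z]) := by
  obtain ⟨e, -, he⟩ := c.eval_abs [] (c.abs 1 (c.abs 2 M))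
  refine ⟨e, fun x => ?_⟩
  obtain ⟨ex, hex, hexy⟩ := c.eval_abs [x] (c.abs 2 M)
  refine ⟨ex, by simpa [he] using hex, fun y => ?_⟩
  obtain ⟨exy, hexy', hexyz⟩ := c.eval_abs [x, y] M
  exact ⟨exy, by simpa [hexy] using hexy', hexyz⟩

end Combinators

/-- The fixed-point combinator `λg. W W` with `W = λw x. g (w w) x`. -/
lemma Combinators.exists_fixpoint {Y : Type*} {T : PCAStruct Y} (c : Combinators T) :
    ∃ Z, ∀ g, ∃ z, T.app Z g = Part.some z ∧ ∀ x, T.app z x = pap T (T.app g z) (Part.some x) := by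
  let M : Tm Y := .app (.app (.var 0) (.app (.var 1) (.var 1))) (.var 2)
  let W : Tm Y := c.abs 1 (c.abs 2 M)
  obtain ⟨Z, hZ⟩ := c.exists_lam₁ (.app W W)
  refine ⟨Z, fun g => ?_⟩
  obtain ⟨w, hw, hww'⟩ : ∃ w, W.eval T (c.env [g]) = Part.some w ∧
      ∀ y, T.app w y = (c.abs 2 M).eval T (c.env [g, y]) := c.eval_abs [g] (c.abs 2 M)
  obtain ⟨z, hz, hzx⟩ : ∃ z, (c.abs 2 M).eval T (c.env [g, w]) = Part.some z ∧
      ∀ x, T.app z x = M.eval T (c.env [g, w, x]) := c.eval_abs [g, w] M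
  have hww : T.app w w = Part.some z := by rw [hww', hz]
  refine ⟨z, by simp [hZ, hw, hww], fun x => ?_⟩
  simp [M, hzx, env, hww]

lemma Combinators.exists_rec₂ {Y : Type*} {T : PCAStruct Y} (c : Combinators T) (body : Tm Y) :
    ∃ R, ∀ x y, ∃ z, pap T (T.app R x) (Part.some y) = Part.some z ∧
      ∀ l, T.app z l = body.eval T (c.env [x, y, z, l]) := by
  obtain ⟨Z, hZ⟩ := c.exists_fixpoint
  obtain ⟨R, hR⟩ := c.exists_lam₂ (.app (.con Z) (c.abs 2 (c.abs 3 body)))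
  refine ⟨R, fun x y => ?_⟩
  obtain ⟨Rx, hRx, hRxy⟩ := hR x
  obtain ⟨g, hg, hgz⟩ : ∃ g, (c.abs 2 (c.abs 3 body)).eval T (c.env [x, y]) = Part.some g ∧
      ∀ z, T.app g z = (c.abs 3 body).eval T (c.env [x, y, z]) := c.eval_abs _ _
  obtain ⟨z, hz, hzl⟩ := hZ g
  refine ⟨z, by simp [hRx, hRxy, hg, hz], fun l => ?_⟩
  obtain ⟨gz, hgz', hgzl⟩ : ∃ gz, (c.abs 3 body).eval T (c.env [x, y, z]) = Part.some gz ∧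
      ∀ l, T.app gz l = body.eval T (c.env [x, y, z, l]) := c.eval_abs _ _
  rw [hzl, hgz, hgz', pap_some_some, hgzl]

section Interrogation

variable {mk : List A → A} {qp rp : A → A} {a : A} {α β : A → A}

lemma AInterrog.take_eq {L L' : List A} (hL : AInterrog mk qp a α β L)
    (hL' : AInterrog mk qp a α β L') (hq : Function.Injective qp) :
    ∀ j ≤ L.length, j ≤ L'.length → L.take j = L'.take j := by
  intro j
  induction j with
  | zero => simp
  | succ j ih =>
    intro hj hj'
    obtain ⟨v, hv, hβv⟩ := hL j hj
    obtain ⟨v', hv', hβv'⟩ := hL' j hj'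
    rw [ih (by omega) (by omega)] at hv
    obtain rfl : v = v' := hq (hv.symm.trans hv')
    rw [List.take_succ_eq_append_getElem hj, List.take_succ_eq_append_getElem hj',
      ih (by omega) (by omega), ← hβv, ← hβv']

lemma phiA_unique (hq : Function.Injective qp) (hr : Function.Injective rp)
    (hqr : ∀ v c, qp v ≠ rp c) {c c' : A}
    (h : phiA mk qp rp a α β c) (h' : phiA mk qp rp a α β c') : c = c' := by
  obtain ⟨L, hL, hc⟩ := h
  obtain ⟨L', hL', hc'⟩ := h'
  have htake := hL.take_eq hL' hq
  -- a strictly shorter interrogation would end in an answer where the longer one asks a query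
  have hlen : L.length = L'.length := by
    by_contra hne
    rcases lt_or_gt_of_ne hne with hlt | hlt
    · obtain ⟨v, hv, -⟩ := hL' L.length hlt
      rw [← htake _ le_rfl hlt.le, List.take_length, hc] at hv
      exact hqr v c hv.symm
    · obtain ⟨v, hv, -⟩ := hL L'.length hlt
      rw [htake _ hlt.le le_rfl, List.take_length, hc'] at hv
      exact hqr v c' hv.symm
  have hLL' : L = L' := by
    have := htake L.length le_rfl hlen.le
    rwa [List.take_length, hlen, List.take_length] at this
  subst hLL'
  exact hr (hc.symm.trans hc')

lemma phiA.prefix_induction {c : A} (Q : List A → Prop) (h : phiA mk qp rp a α β c)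
    (hres : ∀ L, α (mk (a :: L)) = rp c → Q L)
    (hqry : ∀ L v, α (mk (a :: L)) = qp v → Q (L ++ [β v]) → Q L) : Q [] := by
  obtain ⟨L, hL, hc⟩ := h
  suffices ∀ n j, j + n = L.length → Q (L.take j) by simpa using this L.length 0 (by simp)
  intro n
  induction n with
  | zero =>
    intro j hj
    rw [show j = L.length by omega, List.take_length]
    exact hres L hc
  | succ n ih =>
    intro j hj
    obtain ⟨v, hv, hβv⟩ := hL j (by omega)
    refine hqry _ v hv ?_
    rw [hβv, ← List.take_succ_eq_append_getElem]
    exact ih (j + 1) (by omega)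

lemma phiA_of_result {c : A} (h : α (mk [a]) = rp c) : phiA mk qp rp a α β c :=
  ⟨[], fun j hj => absurd hj (by simp), h⟩

lemma phiA_of_query {v c : A} (hv : α (mk [a]) = qp v) (hc : α (mk [a, β v]) = rp c) :
    phiA mk qp rp a α β c := by
  refine ⟨[β v], fun j hj => ?_, hc⟩
  obtain rfl : j = 0 := by simpa using hj
  exact ⟨v, hv, rfl⟩

lemma phiA_of_mem_K2_app {ζ : A → A} (h : ζ ∈ (K2 mk qp rp).app α β) :
    phiA mk qp rp a α β (ζ a) := by
  obtain ⟨hdom, rfl⟩ := h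
  exact (hdom a).choose_spec

lemma mem_K2_app (hq : Function.Injective qp) (hr : Function.Injective rp)
    (hqr : ∀ v c, qp v ≠ rp c) {ζ : A → A} (h : ∀ a, phiA mk qp rp a α β (ζ a)) :
    ζ ∈ (K2 mk qp rp).app α β :=
  ⟨fun a => ⟨ζ a, h a⟩, funext fun a => phiA_unique hq hr hqr (Exists.choose_spec _) (h a)⟩

def codedSnd (mk : List A → A) (w : A) : Option A :=
  match Function.partialInv mk w with
  | some [_, x] => some x
  | _ => none

/-- As an element of `K₂`: asks its oracle once, at an arbitrary point, and returns `α` of the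
reply. -/
def K2lift (mk : List A → A) (qp rp : A → A) (α : A → A) (w : A) : A :=
  (codedSnd mk w).elim (qp w) (fun x => rp (α x))

def K2liftOp (mk : List A → A) (qp rp : A → A) (w : A) : A :=
  match Function.partialInv mk w with
  | some [w'] => (codedSnd mk w').elim (rp (qp w')) qp
  | some [_, y] => rp (rp y)
  | _ => w

lemma codedSnd_singleton (hmk : Function.Injective mk) : codedSnd mk (mk [a]) = none := by
  simp [codedSnd, Function.partialInv_left hmk]

lemma codedSnd_pair (hmk : Function.Injective mk) (x : A) : codedSnd mk (mk [a, x]) = some x := by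
  simp [codedSnd, Function.partialInv_left hmk]

lemma const_mem_app_K2lift (hmk : Function.Injective mk) (hq : Function.Injective qp)
    (hr : Function.Injective rp) (hqr : ∀ v c, qp v ≠ rp c) (x : A) :
    Function.const A (α x) ∈ (K2 mk qp rp).app (K2lift mk qp rp α) (Function.const A x) :=
  mem_K2_app hq hr hqr fun a => phiA_of_query (v := mk [a])
    (by simp [K2lift, codedSnd_singleton hmk]) (by simp [K2lift, codedSnd_pair hmk])

lemma K2lift_mem_app (hmk : Function.Injective mk) (hq : Function.Injective qp)
    (hr : Function.Injective rp) (hqr : ∀ v c, qp v ≠ rp c) :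
    K2lift mk qp rp α ∈ (K2 mk qp rp).app (K2liftOp mk qp rp) α := by
  refine mem_K2_app hq hr hqr fun w => ?_
  cases hw : codedSnd mk w with
  | none => exact phiA_of_result (by simp [K2liftOp, K2lift, Function.partialInv_left hmk, hw])
  | some x =>
    exact phiA_of_query (v := x) (by simp [K2liftOp, Function.partialInv_left hmk, hw])
      (by simp [K2liftOp, K2lift, Function.partialInv_left hmk, hw])

end Interrogation

section RepresentingMorphism

variable {X B : Type*} {T : PCAStruct B} {δ : X → Set B}

def repMor (T : PCAStruct B) (δ : X → Set B) : (X → X) → Set B :=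
  fun α => {b | RepresentsPFun T δ (fun x => some (α x)) b}

lemma mem_repMor {α : X → X} {b : B} :
    b ∈ repMor T δ α ↔ ∀ x, ∀ u ∈ δ x, ∃ v ∈ T.app b u, v ∈ δ (α x) := by
  simp [repMor, RepresentsPFun]

lemma mem_morComp_const {E : (X → X) → Set B} {x : X} {b : B} :
    b ∈ morComp (fun x => {Function.const X x}) E x ↔ b ∈ E (Function.const X x) := by
  simp [morComp]

lemma isDecidableMor_repMor (hT : IsPCA T) {x₀ : X} {u₀ : B} (hu₀ : u₀ ∈ δ x₀) {t f : X}
    {tB fB : B} (hdec : IsDecidableMor T δ t f tB fB) :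
    IsDecidableMor T (repMor T δ) (Function.const X t) (Function.const X f) tB fB := by
  obtain ⟨c⟩ := hT.nonempty_combinators
  obtain ⟨d, hdt, hdf⟩ := hdec
  obtain ⟨e, he⟩ := c.exists_lam₁ (.app (.con d) (.app (.var 0) (.con u₀)))
  have he_const : ∀ x, ∀ b ∈ repMor T δ (Function.const X x),
      ∃ v ∈ δ x, T.app e b = T.app d v := by
    intro x b hb
    obtain ⟨v, hv, hvx⟩ := mem_repMor.1 hb x₀ u₀ hu₀
    exact ⟨v, hvx, by simp [he, Combinators.env, Part.eq_some_iff.2 hv]⟩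
  refine ⟨e, fun b hb => ?_, fun b hb => ?_⟩
  · obtain ⟨v, hv, hev⟩ := he_const _ b hb
    rw [hev, hdt v hv]
  · obtain ⟨v, hv, hev⟩ := he_const _ b hb
    rw [hev, hdf v hv]

lemma morEquiv_comp_repMor (hT : IsPCA T) {x₀ : X} {u₀ : B} (hu₀ : u₀ ∈ δ x₀) :
    morEquiv T (morComp (fun x => {Function.const X x}) (repMor T δ)) δ := by
  obtain ⟨c⟩ := hT.nonempty_combinators
  refine ⟨?_, c.k, fun x u hu => ?_⟩
  · obtain ⟨e, he⟩ := c.exists_lam₁ (.app (.var 0) (.con u₀))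
    refine ⟨e, fun x b hb => ?_⟩
    obtain ⟨v, hv, hvx⟩ := mem_repMor.1 (mem_morComp_const.1 hb) x₀ u₀ hu₀
    exact ⟨v, by simpa [he, Combinators.env] using hv, hvx⟩
  · obtain ⟨ku, hku, hkuy⟩ := c.k_app u
    refine ⟨ku, hku ▸ Part.mem_some ku, mem_morComp_const.2 (mem_repMor.2 fun _ _ _ => ?_)⟩
    exact ⟨u, by rw [hkuy]; exact Part.mem_some u, hu⟩

/-- An `ε'`-code `b` of `α` is sent to `λu. s₁ (r (r dD b) (s₂ u))`, where `r` realizes `ε'`,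
`dD ∈ ε' D`, and `s₁`, `s₂` witness `ε' ∘ const ≅ δ`. -/
lemma morLE_repMor (hT : IsPCA T) {K : PCAStruct (X → X)} {D : X → X}
    (hD : ∀ α, ∃ ζ ∈ K.app D α, ∀ x, Function.const X (α x) ∈ K.app ζ (Function.const X x))
    {ε' : (X → X) → Set B} (hε' : IsAppMor K T ε')
    (heq : morEquiv T (morComp (fun x => {Function.const X x}) ε') δ) :
    morLE T ε' (repMor T δ) := by
  obtain ⟨c⟩ := hT.nonempty_combinators
  obtain ⟨hne, r, hr⟩ := hε'
  obtain ⟨⟨s₁, hs₁⟩, s₂, hs₂⟩ := heq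
  obtain ⟨dD, hdD⟩ := hne D
  obtain ⟨e, he⟩ := c.exists_lam₂ (.app (.con s₁)
    (.app (.app (.con r) (.app (.app (.con r) (.con dD)) (.var 0))) (.app (.con s₂) (.var 1))))
  refine ⟨e, fun α b hb => ?_⟩
  obtain ⟨eb, heb, hebu⟩ := he b
  refine ⟨eb, heb ▸ Part.mem_some eb, mem_repMor.2 fun x u hu => ?_⟩
  obtain ⟨ζ, hζ, hζx⟩ := hD α
  obtain ⟨w₁, hw₁, hw₁ζ⟩ := hr D α ζ hζ dD hdD b hb
  obtain ⟨w₂, hw₂, hw₂x⟩ := hs₂ x u hu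
  obtain ⟨w₃, hw₃, hw₃αx⟩ := hr ζ _ _ (hζx x) w₁ hw₁ζ w₂ (mem_morComp_const.1 hw₂x)
  obtain ⟨v, hv, hvαx⟩ := hs₁ (α x) w₃ (mem_morComp_const.2 hw₃αx)
  refine ⟨v, ?_, hvαx⟩
  rw [hebu]
  simp only [Tm.eval, Combinators.env, List.getD_cons_zero, List.getD_cons_succ, pap_some_some]
  exact mem_pap (Part.mem_some s₁) (mem_pap_app hw₃ hw₁ hw₂) hv

end RepresentingMorphism

lemma exists_interrogation_realizer {B : Type*} {T : PCAStruct B} (hT : IsPCA T) {tB fB : B}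
    (hbB : IsBooleans T tB fB) (d rδ e₀ e₁ eSnoc rinit : B) :
    ∃ r, ∀ b b', ∃ w ∈ pap T (T.app r b) (Part.some b'), ∃ z,
      (∀ u, T.app w u = pap T (Part.some z) (T.app rinit u)) ∧
      (∀ l u₁ u₂ v, u₁ ∈ T.app b l → u₂ ∈ pap T (T.app rδ e₀) (Part.some u₁) →
        T.app d u₂ = Part.some tB → v ∈ pap T (T.app rδ e₁) (Part.some u₁) → v ∈ T.app z l) ∧
      (∀ l u₁ u₂ q y s l' v, u₁ ∈ T.app b l → u₂ ∈ pap T (T.app rδ e₀) (Part.some u₁) →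
        T.app d u₂ = Part.some fB → q ∈ pap T (T.app rδ e₁) (Part.some u₁) → y ∈ T.app b' q →
        s ∈ pap T (T.app rδ eSnoc) (Part.some l) → l' ∈ pap T (T.app rδ s) (Part.some y) →
        v ∈ T.app z l' → v ∈ T.app z l) := by
  obtain ⟨c⟩ := hT.nonempty_combinators
  obtain ⟨-, C, hC⟩ := hbB
  -- variables: `0 = b`, `1 = b'`, `2 = z` (the loop itself), `3 = l` (the state); both branches
  -- are abstracted over a dummy variable `4`, so that only the selected one gets evaluated
  let out : Tm B := .app (.app (.con rδ) (.con e₁)) (.app (.var 0) (.var 3))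
  let next : Tm B := .app (.var 2)
    (.app (.app (.con rδ) (.app (.app (.con rδ) (.con eSnoc)) (.var 3))) (.app (.var 1) out))
  let body : Tm B := .app (.app (.app (.app (.con C) (.app (.con d)
    (.app (.app (.con rδ) (.con e₀)) (.app (.var 0) (.var 3))))) (c.abs 4 out)) (c.abs 4 next))
    (.var 3)
  obtain ⟨R, hR⟩ := c.exists_rec₂ body
  obtain ⟨r, hr⟩ := c.exists_lam₃
    (.app (.app (.app (.con R) (.var 0)) (.var 1)) (.app (.con rinit) (.var 2)))
  refine ⟨r, fun b b' => ?_⟩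
  obtain ⟨rb, hrb, hrbb'⟩ := hr b
  obtain ⟨w, hw, hwu⟩ := hrbb' b'
  obtain ⟨z, hz, hzl⟩ := hR b b'
  have hbody : ∀ l u₁, u₁ ∈ T.app b l → ∃ M N, T.app z l = pap T (pap T (pap T (pap T
      (Part.some C) (pap T (Part.some d) (pap T (T.app rδ e₀) (Part.some u₁)))) (Part.some M))
      (Part.some N)) (Part.some l) ∧ T.app M l = pap T (T.app rδ e₁) (Part.some u₁) ∧
      T.app N l = pap T (Part.some z) (pap T (pap T (Part.some rδ)
        (pap T (T.app rδ eSnoc) (Part.some l)))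
        (pap T (Part.some b') (pap T (T.app rδ e₁) (Part.some u₁)))) := by
    intro l u₁ hu₁
    obtain ⟨M, hM, hMy⟩ : ∃ M, (c.abs 4 out).eval T (c.env [b, b', z, l]) = Part.some M ∧
        ∀ y, T.app M y = out.eval T (c.env [b, b', z, l, y]) := c.eval_abs _ _
    obtain ⟨N, hN, hNy⟩ : ∃ N, (c.abs 4 next).eval T (c.env [b, b', z, l]) = Part.some N ∧
        ∀ y, T.app N y = next.eval T (c.env [b, b', z, l, y]) := c.eval_abs _ _
    refine ⟨M, N, ?_, ?_, ?_⟩ <;>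
      simp [hzl, hMy, hNy, body, out, next, hM, hN, Combinators.env, Part.eq_some_iff.2 hu₁]
  refine ⟨w, by simp [hrb, hw], z, fun u => by simp [hwu, hz, Combinators.env], ?_, ?_⟩
  · intro l u₁ u₂ v hu₁ hu₂ hd hv
    obtain ⟨M, N, hzl, hMl, -⟩ := hbody l u₁ hu₁
    rwa [hzl, Part.eq_some_iff.2 hu₂, pap_some_some, hd, pap_some_some, (hC M N).1,
      pap_some_some, hMl]
  · intro l u₁ u₂ q y s l' v hu₁ hu₂ hd hq hy hs hl' hv
    obtain ⟨M, N, hzl, -, hNl⟩ := hbody l u₁ hu₁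
    rw [hzl, Part.eq_some_iff.2 hu₂, pap_some_some, hd, pap_some_some, (hC M N).2,
      pap_some_some, hNl]
    exact mem_pap (Part.mem_some z) (mem_pap_app hl' hs (mem_pap (Part.mem_some b') hq hy)) hv

namespace StdPCA

variable (P : StdPCA A)

lemma pairF_inj {x y x' y' : A} (h : P.pairF x y = P.pairF x' y') : x = x' ∧ y = y' := by
  have h₀ := P.P0_spec x y
  have h₁ := P.P1_spec x y
  rw [h, P.P0_spec] at h₀
  rw [h, P.P1_spec] at h₁
  exact ⟨(Part.some_inj.1 h₀).symm, (Part.some_inj.1 h₁).symm⟩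

lemma pairF_injective (x : A) : Function.Injective (P.pairF x) :=
  fun _ _ h => (P.pairF_inj h).2

lemma pairF_f_ne_pairF_t (v c : A) : P.pairF P.f v ≠ P.pairF P.t c :=
  fun h => P.t_ne_f (P.pairF_inj h).1.symm

lemma mem_P0_app (x y : A) : x ∈ P.S.app P.P0 (P.pairF x y) :=
  Part.eq_some_iff.1 (P.P0_spec x y)

lemma mem_P1_app (x y : A) : y ∈ P.S.app P.P1 (P.pairF x y) :=
  Part.eq_some_iff.1 (P.P1_spec x y)

lemma exists_mem_SNOC_app (L : List A) (y : A) :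
    ∃ s ∈ P.S.app P.SNOC (P.tup L), P.tup (L ++ [y]) ∈ P.S.app s y := by
  obtain ⟨s, hs, _, hy, hsy⟩ := mem_pap_iff.1 (Part.eq_some_iff.1 (P.SNOC_spec L y))
  obtain rfl := Part.mem_some_iff.1 hy
  exact ⟨s, hs, hsy⟩

end StdPCA

lemma isAppMor_repMor {B : Type*} {T : PCAStruct B} (P : StdPCA A) (hT : IsPCA T) {tB fB : B}
    (hbB : IsBooleans T tB fB) {δ : A → Set B} (hδ : IsAppMor P.S T δ)
    (hdec : IsDecidableMor T δ P.t P.f tB fB)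
    (hrep : ∀ g : A → A, ∃ rg, RepresentsPFun T δ (fun a => some (g a)) rg) :
    IsAppMor (K2 P.tup (P.pairF P.f) (P.pairF P.t)) T (repMor T δ) := by
  obtain ⟨hne, rδ, hrδ⟩ := hδ
  obtain ⟨d, hdt, hdf⟩ := hdec
  obtain ⟨e₀, he₀⟩ := hne P.P0
  obtain ⟨e₁, he₁⟩ := hne P.P1
  obtain ⟨eSnoc, heSnoc⟩ := hne P.SNOC
  obtain ⟨rinit, hrinit⟩ := hrep fun a => P.tup [a]
  obtain ⟨r, hr⟩ := exists_interrogation_realizer hT hbB d rδ e₀ e₁ eSnoc rinit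
  refine ⟨hrep, r, fun α β ζ hζ b hb b' hb' => ?_⟩
  obtain ⟨w, hw, z, hwu, hres, hqry⟩ := hr b b'
  refine ⟨w, hw, mem_repMor.2 fun a u hu => ?_⟩
  obtain ⟨l₀, hl₀, hl₀δ⟩ := hrinit a _ rfl u hu
  have hloop : ∀ l ∈ δ (P.tup [a]), ∃ v ∈ T.app z l, v ∈ δ (ζ a) := by
    refine (phiA_of_mem_K2_app (a := a) hζ).prefix_induction
      (fun L => ∀ l ∈ δ (P.tup (a :: L)), ∃ v ∈ T.app z l, v ∈ δ (ζ a)) ?_ ?_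
    · intro L hL l hl
      obtain ⟨u₁, hu₁, hu₁δ⟩ := mem_repMor.1 hb _ l hl
      rw [hL] at hu₁δ
      obtain ⟨u₂, hu₂, hu₂δ⟩ := hrδ _ _ _ (P.mem_P0_app _ _) e₀ he₀ u₁ hu₁δ
      obtain ⟨v, hv, hvδ⟩ := hrδ _ _ _ (P.mem_P1_app _ _) e₁ he₁ u₁ hu₁δ
      exact ⟨v, hres l u₁ u₂ v hu₁ hu₂ (hdt u₂ hu₂δ) hv, hvδ⟩
    · intro L q hL ih l hl
      obtain ⟨u₁, hu₁, hu₁δ⟩ := mem_repMor.1 hb _ l hl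
      rw [hL] at hu₁δ
      obtain ⟨u₂, hu₂, hu₂δ⟩ := hrδ _ _ _ (P.mem_P0_app _ _) e₀ he₀ u₁ hu₁δ
      obtain ⟨q', hq', hq'δ⟩ := hrδ _ _ _ (P.mem_P1_app _ _) e₁ he₁ u₁ hu₁δ
      obtain ⟨y, hy, hyδ⟩ := mem_repMor.1 hb' q q' hq'δ
      obtain ⟨sv, hsv, hsvy⟩ := P.exists_mem_SNOC_app (a :: L) (β q)
      obtain ⟨s, hs, hsδ⟩ := hrδ _ _ _ hsv eSnoc heSnoc l hl
      obtain ⟨l', hl', hl'δ⟩ := hrδ _ _ _ hsvy s hsδ y hyδ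
      obtain ⟨v, hv, hvδ⟩ := ih l' hl'δ
      exact ⟨v, hqry l u₁ u₂ q' y s l' v hu₁ hu₂ (hdf u₂ hu₂δ) hq' hy hs hl' hv, hvδ⟩
  obtain ⟨v, hv, hvδ⟩ := hloop l₀ hl₀δ
  exact ⟨v, by rw [hwu]; exact mem_pap (Part.mem_some z) hl₀ hv, hvδ⟩

/-- Let `K₂(A)` be based on the pca `A` (its coding is `A`'s
standard tuple coding, queries are `p⊥v` and results `p⊤c`). For any decidable
applicative morphism `δ : A → B` w.r.t. which every total function `A → A` is
representable, `ε(α) = {b | b represents α w.r.t. δ}` is the greatest decidable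
applicative morphism `K₂(A) → B` with `ε ∘ γ ≅ δ`. -/
theorem statement10 {A B : Type u} (P : StdPCA A)
    (T : PCAStruct B) (hT : IsPCA T) (tB fB : B) (hbB : IsBooleans T tB fB)
    (δ : A → Set B) (hδ : IsAppMor P.S T δ)
    (hdec : IsDecidableMor T δ P.t P.f tB fB)
    (hrep : ∀ g : A → A, ∃ rg, RepresentsPFun T δ (fun a => some (g a)) rg) :
    let K := K2 P.tup (fun v => P.pairF P.f v) (fun c => P.pairF P.t c)
    let γ : A → Set (A → A) := fun a => {Function.const A a}
    let ε : (A → A) → Set B := fun α => {b | RepresentsPFun T δ (fun x => some (α x)) b}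
    IsAppMor K T ε ∧
    IsDecidableMor T ε (Function.const A P.t) (Function.const A P.f) tB fB ∧
    morEquiv T (morComp γ ε) δ ∧
    ∀ ε' : (A → A) → Set B, IsAppMor K T ε' →
      IsDecidableMor T ε' (Function.const A P.t) (Function.const A P.f) tB fB →
      morEquiv T (morComp γ ε') δ → morLE T ε' ε := by
  intro K γ ε
  obtain ⟨u₀, hu₀⟩ := hδ.1 P.t
  have hlift : ∀ α : A → A, ∃ ζ ∈ K.app (K2liftOp P.tup (P.pairF P.f) (P.pairF P.t)) α,
      ∀ x, Function.const A (α x) ∈ K.app ζ (Function.const A x) := fun α =>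
    ⟨_, K2lift_mem_app P.tup_inj (P.pairF_injective _) (P.pairF_injective _) P.pairF_f_ne_pairF_t,
      const_mem_app_K2lift P.tup_inj (P.pairF_injective _) (P.pairF_injective _)
        P.pairF_f_ne_pairF_t⟩
  exact ⟨isAppMor_repMor P hT hbB hδ hdec hrep, isDecidableMor_repMor hT hu₀ hdec,
    morEquiv_comp_repMor hT hu₀, fun ε' hε' _ heq => morLE_repMor hT hlift hε' heq⟩

end OostenK2
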